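/- Let (W,S) be a Coxeter system and I ⊆ S. Suppose a, b ∈ W are minimal coset representatives in W^I and x, y ∈ W_I satisfy ax ≤ by in Bruhat order. Then there exist u, v ∈ W_I with x = uv, ℓ(x) = ℓ(u) + ℓ(v), au ≤ b, and v ≤ y. -/

import Mathlib

/-!
Fix a reduced word `β` for `b` and a reduced word `η` for `y` using only letters of `I`. By the
subword property, `ax` is the product of a reduced subword `τ₁ ++ τ₂` of `β ++ η` with `τ₁ <+ β`
and `τ₂ <+ η`. Then `v := π τ₂ ∈ W_I` and `u := x v⁻¹` satisfy `au = π τ₁ ≤ b` and `v ≤ y`, and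
since lengths add on the coset `a W_I` when `a ∈ W^I`, the identity
`ℓ(a) + ℓ(x) = ℓ(ax) = ℓ(au) + ℓ(v) = ℓ(a) + ℓ(u) + ℓ(v)` follows.

Here the subword property is used for the word `β ++ η`, which need not be reduced, rather than
for the word in the definition of `≤`. It is obtained by passing through chains `u → ut`
(`t` a reflection, `ℓ(u) < ℓ(ut)`), whose links can be removed one letter at a time from any word
by the strong exchange condition. That condition comes from the action of `W` on `W × ZMod 2` in
which `sᵢ` acts by `(w, ε) ↦ (sᵢ w sᵢ, ε + [w = sᵢ])`: it counts mod 2 how often a reflection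
occurs in the right inversion sequence of a word, independently of the word.
-/

/-- The Bruhat order on a Coxeter group. -/
def bruhatLE {B W : Type*} [Group W] {M : CoxeterMatrix B} (cs : CoxeterSystem M W)
    (u v : W) : Prop :=
  ∃ ω : List B, cs.IsReduced ω ∧ cs.wordProd ω = v ∧
    ∃ ω' : List B, ω'.Sublist ω ∧ cs.IsReduced ω' ∧ cs.wordProd ω' = u

/-- The standard parabolic subgroup generated by the simple reflections in `I`. -/
def parabolic {B W : Type*} [Group W] {M : CoxeterMatrix B} (cs : CoxeterSystem M W)
    (I : Set B) : Subgroup W :=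
  Subgroup.closure (cs.simple '' I)

/-- The double coset `W_I w W_J`. -/
def doubleCoset {B W : Type*} [Group W] {M : CoxeterMatrix B} (cs : CoxeterSystem M W)
    (I J : Set B) (w : W) : Set W :=
  {x : W | ∃ a ∈ parabolic cs I, ∃ b ∈ parabolic cs J, x = a * w * b}

namespace CoxeterSystem

open List

variable {B W : Type*} [Group W] {M : CoxeterMatrix B} (cs : CoxeterSystem M W)

local prefix:100 "s" => cs.simple
local prefix:100 "π" => cs.wordProd
local prefix:100 "ℓ" => cs.length
local prefix:100 "ris" => cs.rightInvSeq

section ReflectionRepresentation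

open scoped Classical

theorem simple_mul_mul_simple_eq_simple_iff (i : B) (w : W) : s i * w * s i = s i ↔ w = s i := by
  rw [mul_assoc, mul_eq_left, ← cs.inv_simple, mul_inv_eq_one, cs.inv_simple]

noncomputable def reflPerm (i : B) : Equiv.Perm (W × ZMod 2) :=
  Function.Involutive.toPerm (fun p => (s i * p.1 * s i, p.2 + if p.1 = s i then 1 else 0))
    fun p => by
      ext
      · simp [mul_assoc, cs.simple_mul_simple_cancel_left, cs.simple_mul_simple_self]
      · simp only [cs.simple_mul_mul_simple_eq_simple_iff]
        split_ifs <;> simp [add_assoc, CharTwo.add_self_eq_zero]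

theorem reflPerm_apply (i : B) (p : W × ZMod 2) :
    cs.reflPerm i p = (s i * p.1 * s i, p.2 + if p.1 = s i then 1 else 0) := rfl

theorem prod_map_reflPerm_apply (ω : List B) (p : W × ZMod 2) :
    (ω.map cs.reflPerm).prod p = (π ω * p.1 * (π ω)⁻¹, p.2 + (ris ω).count p.1) := by
  induction ω generalizing p with
  | nil => simp
  | cons i ω ih =>
    have hcond : ((π ω)⁻¹ * s i * π ω == p.1) = true ↔ π ω * p.1 * (π ω)⁻¹ = s i := by
      rw [beq_iff_eq, eq_comm]
      constructor <;> rintro h <;> [rw [h]; rw [← h]] <;> group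
    simp only [map_cons, prod_cons, Equiv.Perm.mul_apply, ih, reflPerm_apply, rightInvSeq,
      wordProd_cons, count_cons, hcond]
    ext
    · simp only [mul_inv_rev, cs.inv_simple, mul_assoc]
    · split_ifs <;> simp [add_assoc]

theorem rightInvSeq_alternatingWord (i j : B) (m : ℕ) :
    ris (alternatingWord i j m) = ((range m).map fun k => (s j * s i) ^ k * s j).reverse := by
  induction m generalizing i j with
  | zero => simp [alternatingWord]
  | succ m ih =>
    have hconj (k : ℕ) :
        MulAut.conj (s j) ((s i * s j) ^ k * s i) = (s j * s i) ^ (k + 1) * s j := by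
      have : SemiconjBy (s j) (s i * s j) (s j * s i) := by simp [SemiconjBy, mul_assoc]
      rw [MulAut.conj_apply, cs.inv_simple, ← mul_assoc, this.pow_right k, pow_succ]
      simp only [mul_assoc]
    rw [alternatingWord_succ, rightInvSeq_concat, ih, range_succ_eq_map]
    simp [map_reverse, hconj]

theorem even_count_rightInvSeq_alternatingWord (i j : B) (t : W) :
    Even ((ris (alternatingWord i j (2 * M i j))).count t) := by
  have hperiodic (k : ℕ) : (s j * s i) ^ (M i j + k) * s j = (s j * s i) ^ k * s j := by
    rw [pow_add, simple_mul_simple_pow', one_mul]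
  rw [rightInvSeq_alternatingWord, count_reverse, two_mul, range_add, map_append, count_append,
    map_map]
  simp only [Function.comp_def, hperiodic]
  exact ⟨_, rfl⟩

theorem prod_map_alternatingWord {G : Type*} [Monoid G] (f : B → G) (i j : B) (m : ℕ) :
    ((alternatingWord i j (2 * m)).map f).prod = (f i * f j) ^ m := by
  induction m with
  | zero => simp [alternatingWord]
  | succ m ih =>
    rw [mul_add_one, alternatingWord_succ', alternatingWord_succ', pow_succ', ← ih]
    simp [mul_assoc]

theorem isLiftable_reflPerm : M.IsLiftable cs.reflPerm := by
  intro i j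
  ext p : 1
  have hprod : π (alternatingWord i j (2 * M i j)) = 1 := by
    rw [prod_alternatingWord_eq_mul_pow, if_pos (even_two_mul _), Nat.mul_div_cancel_left _ two_pos,
      simple_mul_simple_pow, one_mul]
  obtain ⟨c, hc⟩ := cs.even_count_rightInvSeq_alternatingWord i j p.1
  rw [← prod_map_alternatingWord, prod_map_reflPerm_apply, hprod, hc]
  simp [CharTwo.add_self_eq_zero]

noncomputable def reflRep : W →* Equiv.Perm (W × ZMod 2) :=
  cs.lift ⟨cs.reflPerm, cs.isLiftable_reflPerm⟩

/-- The parity of the multiplicity of `t` in the right inversion sequence of any word for `w`. -/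
noncomputable def inversionParity (w t : W) : ZMod 2 := (cs.reflRep w (t, 0)).2

theorem reflRep_wordProd (ω : List B) : cs.reflRep (π ω) = (ω.map cs.reflPerm).prod := by
  simp [reflRep, wordProd, map_list_prod, Function.comp_def]

theorem inversionParity_wordProd (ω : List B) (t : W) :
    cs.inversionParity (π ω) t = (ris ω).count t := by
  simp [inversionParity, reflRep_wordProd, prod_map_reflPerm_apply]

theorem reflRep_apply (w : W) (p : W × ZMod 2) :
    cs.reflRep w p = (w * p.1 * w⁻¹, p.2 + cs.inversionParity w p.1) := by
  obtain ⟨ω, rfl⟩ := cs.wordProd_surjective w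
  rw [reflRep_wordProd, prod_map_reflPerm_apply, inversionParity_wordProd]

theorem inversionParity_mul (w₁ w₂ t : W) :
    cs.inversionParity (w₁ * w₂) t =
      cs.inversionParity w₁ (w₂ * t * w₂⁻¹) + cs.inversionParity w₂ t := by
  rw [inversionParity, map_mul, Equiv.Perm.mul_apply, reflRep_apply cs w₂, reflRep_apply cs w₁,
    zero_add, add_comm]

theorem inversionParity_one (t : W) : cs.inversionParity 1 t = 0 := by
  simpa using cs.inversionParity_wordProd [] t

theorem inversionParity_simple_simple (i : B) : cs.inversionParity (s i) (s i) = 1 := by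
  simpa using cs.inversionParity_wordProd [i] (s i)

theorem IsReflection.inversionParity_self {t : W} (ht : cs.IsReflection t) :
    cs.inversionParity t t = 1 := by
  obtain ⟨u, i, rfl⟩ := ht
  have hcancel := cs.inversionParity_mul u⁻¹ u (s i)
  rw [inv_mul_cancel, inversionParity_one] at hcancel
  rw [inversionParity_mul, show u⁻¹ * (u * s i * u⁻¹) * u⁻¹⁻¹ = s i by group, inversionParity_mul,
    mul_inv_cancel_right, inversionParity_simple_simple]
  linear_combination -hcancel

theorem mem_rightInvSeq_of_inversionParity_eq_one {ω : List B} {t : W}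
    (h : cs.inversionParity (π ω) t = 1) : t ∈ ris ω := by
  refine count_pos_iff.mp (Nat.pos_of_ne_zero fun h0 => ?_)
  rw [inversionParity_wordProd, h0] at h
  exact zero_ne_one h

theorem isRightInversion_of_inversionParity_eq_one {w t : W} (h : cs.inversionParity w t = 1) :
    cs.IsRightInversion w t := by
  obtain ⟨ω, hω, rfl⟩ := cs.exists_isReduced w
  exact cs.isRightInversion_of_mem_rightInvSeq hω (cs.mem_rightInvSeq_of_inversionParity_eq_one h)

theorem isRightInversion_iff_inversionParity_eq_one {w t : W} :
    cs.IsRightInversion w t ↔ cs.inversionParity w t = 1 := by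
  refine ⟨fun h => ?_, cs.isRightInversion_of_inversionParity_eq_one⟩
  by_contra hne
  have hwt : cs.inversionParity (w * t) t = 1 := by
    rw [inversionParity_mul, mul_inv_cancel_right, h.1.inversionParity_self,
      (by decide : ∀ a : ZMod 2, a ≠ 1 → a = 0) _ hne, zero_add]
  have := (cs.isRightInversion_of_inversionParity_eq_one hwt).2
  rw [mul_assoc, h.1.mul_self, mul_one] at this
  exact lt_asymm h.2 this

theorem inversionParity_eq_zero_iff {w t : W} :
    cs.inversionParity w t = 0 ↔ ¬cs.IsRightInversion w t := by
  rw [isRightInversion_iff_inversionParity_eq_one]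
  generalize cs.inversionParity w t = a
  decide +revert

/-- The strong exchange condition. -/
theorem mem_rightInvSeq_of_isRightInversion {ω : List B} {t : W}
    (h : cs.IsRightInversion (π ω) t) : t ∈ ris ω :=
  cs.mem_rightInvSeq_of_inversionParity_eq_one (cs.isRightInversion_iff_inversionParity_eq_one.mp h)

end ReflectionRepresentation

theorem exists_wordProd_eraseIdx_eq_mul {ω : List B} {t : W} (h : cs.IsRightInversion (π ω) t) :
    ∃ j < ω.length, π (ω.eraseIdx j) = π ω * t := by
  obtain ⟨j, hj, rfl⟩ := mem_iff_getElem.mp (cs.mem_rightInvSeq_of_isRightInversion h)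
  rw [length_rightInvSeq] at hj
  exact ⟨j, hj, by rw [← wordProd_mul_getD_rightInvSeq, getD_eq_getElem]⟩

theorem isReduced_cons_iff {i : B} {ω : List B} :
    cs.IsReduced (i :: ω) ↔ cs.IsReduced ω ∧ ¬cs.IsLeftDescent (π ω) i := by
  rw [not_isLeftDescent_iff, IsReduced, IsReduced, wordProd_cons, length_cons]
  have := cs.length_wordProd_le ω
  have := cs.length_le_length_mul_add_left (s i) (π ω)
  have := cs.length_mul_le (s i) (π ω)
  rw [length_simple] at *
  omega

theorem exists_reduced_sublist (ω : List B) :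
    ∃ τ, τ <+ ω ∧ cs.IsReduced τ ∧ π τ = π ω := by
  induction ω using List.reverseRecOn with
  | nil => exact ⟨[], Sublist.slnil, by simp [IsReduced], rfl⟩
  | append_singleton ω i ih =>
    obtain ⟨σ, hσ, hred, hprod⟩ := ih
    have hprod' : π (σ ++ [i]) = π (ω ++ [i]) := by simp [wordProd_append, hprod]
    by_cases hred' : cs.IsReduced (σ ++ [i])
    · exact ⟨σ ++ [i], hσ.append (Sublist.refl _), hred', hprod'⟩
    have hdesc : cs.IsRightDescent (π σ) i := by
      by_contra hnot
      rw [not_isRightDescent_iff] at hnot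
      exact hred' (by simp [IsReduced, wordProd_append, hnot, hred.eq])
    obtain ⟨j, hj, hdel⟩ := cs.exists_wordProd_eraseIdx_eq_mul
      ((cs.isRightInversion_simple_iff_isRightDescent _ i).mpr hdesc)
    refine ⟨σ.eraseIdx j, (eraseIdx_sublist σ j).trans (hσ.trans (sublist_append_left ω [i])), ?_,
      by rw [hdel, ← hprod', wordProd_append, wordProd_singleton]⟩
    rw [isRightDescent_iff, hred.eq] at hdesc
    rw [IsReduced, hdel, length_eraseIdx_of_lt hj]
    omega

section Parabolic

variable {I : Set B}

theorem simple_mem_parabolic {i : B} (hi : i ∈ I) : s i ∈ parabolic cs I :=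
  Subgroup.subset_closure ⟨i, hi, rfl⟩

theorem wordProd_mem_parabolic {ω : List B} (hω : ∀ i ∈ ω, i ∈ I) : π ω ∈ parabolic cs I := by
  rw [wordProd]
  refine Subgroup.list_prod_mem _ fun _ hw => ?_
  obtain ⟨i, hi, rfl⟩ := mem_map.mp hw
  exact cs.simple_mem_parabolic (hω i hi)

theorem exists_word_of_mem_parabolic {w : W} (hw : w ∈ parabolic cs I) :
    ∃ ω : List B, (∀ i ∈ ω, i ∈ I) ∧ π ω = w := by
  induction hw using Subgroup.closure_induction with
  | mem _ hx =>
    obtain ⟨i, hi, rfl⟩ := hx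
    exact ⟨[i], by simpa using hi, wordProd_singleton cs i⟩
  | one => exact ⟨[], by simp, wordProd_nil cs⟩
  | mul _ _ _ _ hx hy =>
    obtain ⟨ω₁, h₁, rfl⟩ := hx
    obtain ⟨ω₂, h₂, rfl⟩ := hy
    exact ⟨ω₁ ++ ω₂, by simpa using fun i hi => hi.elim (h₁ i) (h₂ i), wordProd_append cs ω₁ ω₂⟩
  | inv _ _ hx =>
    obtain ⟨ω, hω, rfl⟩ := hx
    exact ⟨ω.reverse, by simpa using hω, wordProd_reverse cs ω⟩

theorem exists_reduced_word_of_mem_parabolic {w : W} (hw : w ∈ parabolic cs I) :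
    ∃ ω : List B, (∀ i ∈ ω, i ∈ I) ∧ cs.IsReduced ω ∧ π ω = w := by
  obtain ⟨ω, hω, rfl⟩ := cs.exists_word_of_mem_parabolic hw
  obtain ⟨τ, hτ, hred, hprod⟩ := cs.exists_reduced_sublist ω
  exact ⟨τ, fun i hi => hω i (hτ.subset hi), hred, hprod⟩

theorem exists_eq_mul_simple_of_mem_parabolic {w : W} (hw : w ∈ parabolic cs I) (hw1 : w ≠ 1) :
    ∃ w' ∈ parabolic cs I, ∃ i ∈ I, w = w' * s i ∧ ℓ w = ℓ w' + 1 := by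
  obtain ⟨ω, hω, hred, rfl⟩ := cs.exists_reduced_word_of_mem_parabolic hw
  obtain rfl | ⟨ω, i, rfl⟩ := eq_nil_or_concat ω
  · exact absurd (wordProd_nil cs) hw1
  rw [concat_eq_append] at *
  simp only [mem_append, mem_singleton] at hω
  have hsplit : π (ω ++ [i]) = π ω * s i := by rw [wordProd_append, wordProd_singleton]
  refine ⟨π ω, cs.wordProd_mem_parabolic fun j hj => hω j (.inl hj), i, hω i (.inr rfl), hsplit, ?_⟩
  have hred' := hred.take ω.length
  rw [take_left] at hred'
  rw [hred.eq, hred'.eq, length_append, length_singleton]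

theorem length_mul_eq_add_of_forall_length_le {d : W}
    (hd : ∀ v ∈ parabolic cs I, ℓ d ≤ ℓ (d * v)) {v : W} (hv : v ∈ parabolic cs I) :
    ℓ (d * v) = ℓ d + ℓ v := by
  induction hn : ℓ v using Nat.strong_induction_on generalizing v with
  | _ n ih =>
  rcases eq_or_ne v 1 with rfl | hv1
  · simp [← hn]
  obtain ⟨v', hv', i, hi, rfl, hlen⟩ := cs.exists_eq_mul_simple_of_mem_parabolic hv hv1
  have ih' := ih (ℓ v') (by omega) hv' rfl
  rcases cs.length_mul_simple (d * v') i with hup | hdown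
  · rw [← mul_assoc, hup, ih', ← hn, hlen, add_assoc]
  -- `v' sᵢ v'⁻¹ ∈ W_I` is then a right inversion of `d`, against minimality.
  have hdv' : cs.inversionParity (d * v') (s i) = 1 :=
    cs.isRightInversion_iff_inversionParity_eq_one.mp ⟨cs.isReflection_simple i, by omega⟩
  have hv'i : cs.inversionParity v' (s i) = 0 :=
    cs.inversionParity_eq_zero_iff.mpr fun h => by have := h.2; omega
  rw [inversionParity_mul, hv'i, add_zero] at hdv'
  have hmem : v' * s i * v'⁻¹ ∈ parabolic cs I :=
    mul_mem (mul_mem hv' (cs.simple_mem_parabolic hi)) (inv_mem hv')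
  exact absurd (hd _ hmem) (cs.isRightInversion_of_inversionParity_eq_one hdv').2.not_ge

theorem length_mul_eq_add_of_forall_length_lt_mul_simple {a : W}
    (ha : ∀ i ∈ I, ℓ a < ℓ (a * s i)) {v : W} (hv : v ∈ parabolic cs I) :
    ℓ (a * v) = ℓ a + ℓ v := by
  obtain ⟨g, hg, hmin⟩ : ∃ g ∈ parabolic cs I, ∀ v ∈ parabolic cs I, ℓ (a * g) ≤ ℓ (a * v) :=
    ⟨_, Function.argminOn_mem _ _ ⟨1, one_mem _⟩,
      fun _ hv => Function.argminOn_le (fun g => ℓ (a * g)) _ hv⟩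
  have hd : ∀ v ∈ parabolic cs I, ℓ (a * g) ≤ ℓ (a * g * v) := fun v hv => by
    rw [mul_assoc]
    exact hmin _ (mul_mem hg hv)
  obtain rfl : g = 1 := by
    by_contra hg1
    obtain ⟨v', hv', i, hi, hgv, hlen⟩ :=
      cs.exists_eq_mul_simple_of_mem_parabolic (inv_mem hg) (inv_ne_one.mpr hg1)
    have hag := cs.length_mul_eq_add_of_forall_length_le hd (inv_mem hg)
    have hasi := cs.length_mul_eq_add_of_forall_length_le hd hv'
    rw [mul_inv_cancel_right] at hag
    rw [show a * g * v' = a * s i by rw [← inv_inv g, hgv, mul_inv_rev, cs.inv_simple]; group] at hasi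
    have := ha i hi
    omega
  simpa using cs.length_mul_eq_add_of_forall_length_le hd hv

end Parabolic

section BruhatOrder

def BruhatStep (u v : W) : Prop := ∃ t, cs.IsReflection t ∧ v = u * t ∧ ℓ u < ℓ v

def BruhatChain : W → W → Prop := Relation.ReflTransGen cs.BruhatStep

theorem bruhatStep_simple_mul {w : W} {i : B} (h : ¬cs.IsLeftDescent w i) :
    cs.BruhatStep w (s i * w) := by
  refine ⟨w⁻¹ * s i * w, by simpa using (cs.isReflection_simple i).conj w⁻¹, by group, ?_⟩
  rw [not_isLeftDescent_iff] at h
  omega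

variable {cs} in
theorem BruhatStep.simple_mul {b c : W} {i : B} (h : cs.BruhatStep b c)
    (hb : ¬cs.IsLeftDescent b i) (hc : ¬cs.IsLeftDescent c i) :
    cs.BruhatStep (s i * b) (s i * c) := by
  obtain ⟨t, ht, rfl, hlt⟩ := h
  rw [not_isLeftDescent_iff] at hb hc
  exact ⟨t, ht, (mul_assoc _ _ _).symm, by omega⟩

variable {cs} in
theorem BruhatChain.exists_reduced_sublist {u v : W} (h : cs.BruhatChain u v) {ω : List B}
    (hω : π ω = v) : ∃ τ, τ <+ ω ∧ cs.IsReduced τ ∧ π τ = u := by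
  induction h generalizing ω with
  | refl => exact hω ▸ cs.exists_reduced_sublist ω
  | @tail b _ _ hbc ih =>
    obtain ⟨t, ht, rfl, hlt⟩ := hbc
    have hb : π ω * t = b := by rw [hω, mul_assoc, ht.mul_self, mul_one]
    rw [← hω, ← hb] at hlt
    obtain ⟨j, -, hj⟩ := cs.exists_wordProd_eraseIdx_eq_mul ⟨ht, hlt⟩
    obtain ⟨τ, hτ, hred, rfl⟩ := ih (hj.trans hb)
    exact ⟨τ, hτ.trans (eraseIdx_sublist ω j), hred, rfl⟩

-- Established by induction on `n` together with the lifting property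
-- `BruhatChain.simple_mul_simple_mul`, each needing the other at smaller length.
def SubwordPropertyUpTo (n : ℕ) : Prop :=
  ∀ ⦃ω ω' : List B⦄, cs.IsReduced ω → ω.length ≤ n → ω' <+ ω → cs.IsReduced ω' →
    cs.BruhatChain (π ω') (π ω)

variable {cs} in
theorem BruhatChain.simple_mul_of_isLeftDescent {n : ℕ} (hS : cs.SubwordPropertyUpTo n)
    {u v : W} {j : B} (h : cs.BruhatChain u v) (hu : ¬cs.IsLeftDescent u j)
    (hv : cs.IsLeftDescent v j) (hvn : ℓ v ≤ n) : cs.BruhatChain (s j * u) v := by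
  obtain ⟨σ, hσ, hσv⟩ := cs.exists_isReduced (s j * v)
  have hjσ : π (j :: σ) = v := by rw [wordProd_cons, ← hσv, simple_mul_simple_cancel_left]
  have hredjσ : cs.IsReduced (j :: σ) := cs.isReduced_cons_iff.mpr
    ⟨hσ, by rwa [← hσv, ← isLeftDescent_iff_not_isLeftDescent_mul]⟩
  obtain ⟨τ, hτ, hτred, rfl⟩ := h.exists_reduced_sublist hjσ
  cases hτ with
  | cons _ hτσ =>
    have hredjτ := cs.isReduced_cons_iff.mpr ⟨hτred, hu⟩
    have := hS hredjσ (by rw [← hredjσ.eq, hjσ]; exact hvn) (hτσ.cons_cons j) hredjτ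
    rwa [hjσ, wordProd_cons] at this
  | cons_cons _ _ =>
    rw [wordProd_cons] at hu
    exact absurd (cs.isLeftDescent_iff_not_isLeftDescent_mul.mpr (by
      rw [simple_mul_simple_cancel_left]; exact (cs.isReduced_cons_iff.mp hτred).2)) hu

variable {cs} in
theorem BruhatChain.simple_mul_simple_mul {n : ℕ} (hS : cs.SubwordPropertyUpTo n)
    {u v : W} {j : B} (h : cs.BruhatChain u v) (hu : ¬cs.IsLeftDescent u j)
    (hv : ¬cs.IsLeftDescent v j) (hvn : ℓ v ≤ n) : cs.BruhatChain (s j * u) (s j * v) := by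
  induction h with
  | refl => exact .refl
  | @tail b c hab hbc ih =>
    have hlt : ℓ b < ℓ c := by obtain ⟨_, _, _, hlt⟩ := hbc; exact hlt
    by_cases hb : cs.IsLeftDescent b j
    · exact ((simple_mul_of_isLeftDescent hS hab hu hb (by omega)).tail hbc).tail
        (cs.bruhatStep_simple_mul hv)
    · exact (ih hb (by omega)).tail (hbc.simple_mul hb hv)

theorem subwordPropertyUpTo (n : ℕ) : cs.SubwordPropertyUpTo n := by
  induction n with
  | zero =>
    intro ω ω' _ hlen hsub _
    obtain rfl := List.length_eq_zero_iff.mp (Nat.le_zero.mp hlen)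
    obtain rfl := sublist_nil.mp hsub
    exact .refl
  | succ n ih =>
    intro ω ω' hω hlen hsub hω'
    cases hsub with
    | slnil => exact .refl
    | cons i hsub =>
      obtain ⟨hω₂, hi⟩ := cs.isReduced_cons_iff.mp hω
      rw [wordProd_cons]
      exact (ih hω₂ (by simpa using hlen) hsub hω').tail (cs.bruhatStep_simple_mul hi)
    | cons_cons i hsub =>
      obtain ⟨hω₂, hi⟩ := cs.isReduced_cons_iff.mp hω
      obtain ⟨hτ, hiτ⟩ := cs.isReduced_cons_iff.mp hω'
      rw [wordProd_cons, wordProd_cons]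
      exact (ih hω₂ (by simpa using hlen) hsub hτ).simple_mul_simple_mul ih hiτ hi
        (by rw [hω₂.eq]; simpa using hlen)

theorem bruhatChain_of_bruhatLE {u v : W} (h : bruhatLE cs u v) : cs.BruhatChain u v := by
  obtain ⟨ω, hω, rfl, ω', hsub, hω', rfl⟩ := h
  exact cs.subwordPropertyUpTo ω.length hω le_rfl hsub hω'

end BruhatOrder

end CoxeterSystem

theorem stmt8_general {B W : Type*} [Group W] {M : CoxeterMatrix B} (cs : CoxeterSystem M W)
    (I : Set B) (a b x y : W)
    (ha : ∀ s ∈ I, cs.length a < cs.length (a * cs.simple s))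
    (hx : x ∈ parabolic cs I) (hy : y ∈ parabolic cs I)
    (h : bruhatLE cs (a * x) (b * y)) :
    ∃ u ∈ parabolic cs I, ∃ v ∈ parabolic cs I,
      x = u * v ∧ cs.length x = cs.length u + cs.length v ∧
      bruhatLE cs (a * u) b ∧ bruhatLE cs v y := by
  obtain ⟨β, hβ, rfl⟩ := cs.exists_isReduced b
  obtain ⟨η, hηI, hη, rfl⟩ := cs.exists_reduced_word_of_mem_parabolic hy
  obtain ⟨τ, hτ, hτred, hτx⟩ :=
    (cs.bruhatChain_of_bruhatLE h).exists_reduced_sublist (cs.wordProd_append β η)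
  obtain ⟨τ₁, τ₂, rfl, hτ₁, hτ₂⟩ := List.sublist_append_iff.mp hτ
  have hred₁ : cs.IsReduced τ₁ := by simpa using hτred.take τ₁.length
  have hred₂ : cs.IsReduced τ₂ := by simpa using hτred.drop τ₁.length
  have hq : cs.wordProd τ₂ ∈ parabolic cs I :=
    cs.wordProd_mem_parabolic fun i hi => hηI i (hτ₂.subset hi)
  have hu : x * (cs.wordProd τ₂)⁻¹ ∈ parabolic cs I := mul_mem hx (inv_mem hq)
  have hau : a * (x * (cs.wordProd τ₂)⁻¹) = cs.wordProd τ₁ := by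
    rw [← mul_assoc, ← hτx, cs.wordProd_append, mul_inv_cancel_right]
  refine ⟨_, hu, _, hq, (inv_mul_cancel_right _ _).symm, ?_,
    ⟨β, hβ, rfl, τ₁, hτ₁, hred₁, hau.symm⟩, ⟨η, hη, rfl, τ₂, hτ₂, hred₂, rfl⟩⟩
  have hax := cs.length_mul_eq_add_of_forall_length_lt_mul_simple ha hx
  have hau' := cs.length_mul_eq_add_of_forall_length_lt_mul_simple ha hu
  rw [hau, hred₁.eq] at hau'
  rw [← hτx, hτred.eq, List.length_append] at hax
  rw [hred₂.eq]
  omega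

/-- If `a, b ∈ W^I`, `x, y ∈ W_I` and `ax ≤ by`, then `x = uv` with
`ℓ(x) = ℓ(u) + ℓ(v)`, `au ≤ b` and `v ≤ y`. -/
theorem stmt8 {B W : Type*} [Group W] {M : CoxeterMatrix B} (cs : CoxeterSystem M W)
    (I : Set B) (a b x y : W)
    (ha : ∀ s ∈ I, cs.length a < cs.length (a * cs.simple s))
    (hb : ∀ s ∈ I, cs.length b < cs.length (b * cs.simple s))
    (hx : x ∈ parabolic cs I) (hy : y ∈ parabolic cs I)
    (h : bruhatLE cs (a * x) (b * y)) :
    ∃ u ∈ parabolic cs I, ∃ v ∈ parabolic cs I,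
      x = u * v ∧ cs.length x = cs.length u + cs.length v ∧
      bruhatLE cs (a * u) b ∧ bruhatLE cs v y :=
  stmt8_general cs I a b x y ha hx hy h
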